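/- arXiv:2512.03482 — 3 statements merged into one kernel-verified Lean document; each statement's English description precedes it below -/
import Mathlib

section
/- Let g ∈ U(2,1) have Iwasawa decomposition g = n·a(t₀)·m·k(α,β) with n ∈ N, t₀ ∈ ℝ, m ∈ M (the centralizer of A in K₀), and k(α,β) the image of [[α,β],[-β̄,ᾱ]] ∈ SU(2) under the embedding into K₀. Then for all z ∈ ℂ and τ,t ∈ ℝ: A(g·n(z,τ)·a(t)) = t₀ + t − log( | (α−1)/2 · (−e^t − |z|² + iτ) − β z̄ + (α+1)/2 |² ), where A(·) denotes the Iwasawa A-projection. -/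
open Matrix Complex

noncomputable section

def Jmat : Matrix (Fin 3) (Fin 3) ℂ := !![0,0,1;0,1,0;1,0,0]

def nmat (z : ℂ) (τ : ℝ) : Matrix (Fin 3) (Fin 3) ℂ :=
  !![1, (Real.sqrt 2 : ℂ) * z, (τ : ℂ) * I - (normSq z : ℂ);
     0, 1, -(Real.sqrt 2 : ℂ) * starRingEnd ℂ z;
     0, 0, 1]

def amat (t : ℝ) : Matrix (Fin 3) (Fin 3) ℂ :=
  !![(Real.exp (t/2) : ℂ), 0, 0; 0, 1, 0; 0, 0, (Real.exp (-t/2) : ℂ)]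

def kmat (α β : ℂ) : Matrix (Fin 3) (Fin 3) ℂ :=
  !![(α+1)/2, β/(Real.sqrt 2 : ℂ), (α-1)/2;
     -(starRingEnd ℂ β)/(Real.sqrt 2 : ℂ), starRingEnd ℂ α, -(starRingEnd ℂ β)/(Real.sqrt 2 : ℂ);
     (α-1)/2, β/(Real.sqrt 2 : ℂ), (α+1)/2]

def U21 : Set (Matrix (Fin 3) (Fin 3) ℂ) := {g | gᴴ * Jmat * g = Jmat}

def Nset : Set (Matrix (Fin 3) (Fin 3) ℂ) := {x | ∃ z τ, x = nmat z τ}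

def K0 : Set (Matrix (Fin 3) (Fin 3) ℂ) := {g | gᴴ * Jmat * g = Jmat ∧ gᴴ * g = 1}

/-- The centralizer M of A in K₀. -/
def Mset : Set (Matrix (Fin 3) (Fin 3) ℂ) := {m | m ∈ K0 ∧ ∀ t : ℝ, m * amat t = amat t * m}

/-! The squared norm of the bottom row detects the `A`-projection: the bottom rows of `n ∈ N` and
of `a(s)` are `e₃` and `e^{-s/2} e₃`, so left multiplication by `n a(s)` scales bottom rows by
`e^{-s/2}`, and elements of `K₀` are unitary; hence `n a(s) k` has bottom-row norm `e^{-s}`.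
Writing `g n(z,τ) a(t) = (n₀ a(t₀) m) (k(α,β) n(z,τ) a(t))`, the first factor scales the bottom
row by `e^{-t₀/2}` times a unimodular number (elements of `M` commute with `A`, so their bottom
row is a multiple of `e₃`), and the bottom row of the second factor is computed explicitly; by
`|α|² + |β|² = 1` its squared norm is `e^{-t}` times the squared modulus in the formula. -/

section RowNormSq

variable {m n : Type*}

def rowNormSq [Fintype n] (x : Matrix m n ℂ) (i : m) : ℝ := ∑ j, normSq (x i j)

lemma rowNormSq_of_row_eq_smul [Fintype n] {x y : Matrix m n ℂ} {i : m} {c : ℂ}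
    (h : x i = c • y i) : rowNormSq x i = normSq c * rowNormSq y i := by
  simp only [rowNormSq, Finset.mul_sum, ← normSq_mul]
  exact Finset.sum_congr rfl fun j _ => by rw [h, Pi.smul_apply, smul_eq_mul]

lemma rowNormSq_of_row_eq_single [Fintype n] [DecidableEq n] {x : Matrix m n ℂ} {i : m} {j : n}
    {c : ℂ} (h : x i = Pi.single j c) : rowNormSq x i = normSq c := by
  simp [rowNormSq, h, Pi.single_apply, apply_ite]

lemma rowNormSq_eq_one_of_conjTranspose_mul_self_eq_one [Fintype n] [DecidableEq n]
    {k : Matrix n n ℂ} (hk : kᴴ * k = 1) (i : n) : rowNormSq k i = 1 := by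
  have hii : (k * kᴴ) i i = 1 := by rw [mul_eq_one_comm.mp hk, one_apply_eq]
  simp only [mul_apply, conjTranspose_apply, RCLike.star_def, mul_conj] at hii
  exact_mod_cast hii

lemma row_mul_of_row_eq_single [Fintype m] [DecidableEq m] {A : Matrix m m ℂ} {i : m} {c : ℂ}
    (h : A i = Pi.single i c) (B : Matrix m n ℂ) : (A * B) i = c • B i := by
  rw [mul_apply_eq_vecMul, h, single_vecMul]; rfl

end RowNormSq

lemma apply_eq_zero_of_commute_diagonal {n R : Type*} [Fintype n] [DecidableEq n] [CommRing R]
    [NoZeroDivisors R] {x : Matrix n n R} {d : n → R} (h : Commute x (diagonal d))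
    {i j : n} (hij : d i ≠ d j) : x i j = 0 := by
  have hij' := congrFun (congrFun h.eq i) j
  rw [mul_diagonal, diagonal_mul] at hij'
  have : x i j * (d j - d i) = 0 := by linear_combination hij'
  exact (mul_eq_zero.mp this).resolve_right (sub_ne_zero.mpr hij.symm)

lemma mul_mem_U21 {a b : Matrix (Fin 3) (Fin 3) ℂ} (ha : a ∈ U21) (hb : b ∈ U21) :
    a * b ∈ U21 := by
  change (a * b)ᴴ * Jmat * (a * b) = Jmat
  rw [conjTranspose_mul, show bᴴ * aᴴ * Jmat * (a * b) = bᴴ * (aᴴ * Jmat * a) * b by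
    simp only [Matrix.mul_assoc], ha, hb]

lemma amat_eq_diagonal (t : ℝ) :
    amat t = diagonal ![(Real.exp (t/2) : ℂ), 1, (Real.exp (-t/2) : ℂ)] := by
  ext i j; fin_cases i <;> fin_cases j <;> rfl

lemma nmat_mem_U21 (z : ℂ) (τ : ℝ) : nmat z τ ∈ U21 := by
  have h2 : ((Real.sqrt 2 : ℝ) : ℂ) ^ 2 = 2 := by exact_mod_cast Real.sq_sqrt zero_le_two
  change (nmat z τ)ᴴ * Jmat * nmat z τ = Jmat
  ext i j
  fin_cases i <;> fin_cases j <;> simp [nmat, Jmat, mul_apply, Fin.sum_univ_three, ← mul_conj]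
  ring_nf
  simp [h2]

lemma amat_mem_U21 (t : ℝ) : amat t ∈ U21 := by
  change (amat t)ᴴ * Jmat * amat t = Jmat
  ext i j
  fin_cases i <;> fin_cases j <;>
    simp [amat, Jmat, mul_apply, Fin.sum_univ_three, -ofReal_exp, ← ofReal_mul, ← Real.exp_add] <;>
    ring

lemma nmat_row_two (z : ℂ) (τ : ℝ) : nmat z τ 2 = Pi.single 2 1 := by
  ext j; fin_cases j <;> rfl

lemma amat_row_two (t : ℝ) : amat t 2 = Pi.single 2 (Real.exp (-t/2) : ℂ) := by
  ext j; fin_cases j <;> rfl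

lemma nmat_mul_amat_row_two (z : ℂ) (τ : ℝ) (t : ℝ) :
    (nmat z τ * amat t) 2 = Pi.single 2 (Real.exp (-t/2) : ℂ) := by
  rw [row_mul_of_row_eq_single (nmat_row_two z τ), one_smul, amat_row_two]

lemma normSq_exp_neg_half (t : ℝ) : normSq (Real.exp (-t/2) : ℂ) = Real.exp (-t) := by
  rw [normSq_ofReal, ← Real.exp_add]; ring_nf

lemma exists_row_two_eq_single_of_mem_Mset {m : Matrix (Fin 3) (Fin 3) ℂ} (hm : m ∈ Mset) :
    ∃ c : ℂ, normSq c = 1 ∧ m 2 = Pi.single 2 c := by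
  have hcomm : Commute m (amat 2) := hm.2 2
  rw [amat_eq_diagonal] at hcomm
  have hoff : ∀ j : Fin 3, j ≠ 2 → m 2 j = 0 := by
    intro j hj
    refine apply_eq_zero_of_commute_diagonal hcomm ?_
    fin_cases j
    · exact ofReal_injective.ne (Real.exp_injective.ne (by norm_num))
    · have : Real.exp (-2/2) ≠ 1 := by rw [Ne, Real.exp_eq_one_iff]; norm_num
      exact (by exact_mod_cast this : ((Real.exp (-2/2) : ℝ) : ℂ) ≠ 1)
    · exact absurd rfl hj
  have hrow : m 2 = Pi.single 2 (m 2 2) := by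
    ext j; fin_cases j <;> simp [hoff]
  refine ⟨m 2 2, ?_, hrow⟩
  rw [← rowNormSq_of_row_eq_single hrow]
  exact rowNormSq_eq_one_of_conjTranspose_mul_self_eq_one hm.1.2 2

lemma rowNormSq_of_iwasawa {x n k : Matrix (Fin 3) (Fin 3) ℂ} {s : ℝ} (hn : n ∈ Nset)
    (hk : k ∈ K0) (hx : x = n * amat s * k) : rowNormSq x 2 = Real.exp (-s) := by
  obtain ⟨z, τ, rfl⟩ := hn
  rw [hx, rowNormSq_of_row_eq_smul (row_mul_of_row_eq_single (nmat_mul_amat_row_two z τ s) k),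
    rowNormSq_eq_one_of_conjTranspose_mul_self_eq_one hk.2, normSq_exp_neg_half, mul_one]

lemma kmat_mul_nmat_mul_amat_row_two (α β z : ℂ) (τ t : ℝ) :
    (kmat α β * nmat z τ * amat t) 2 =
      ![(α - 1)/2 * (Real.exp (t/2) : ℂ), ((α - 1) * z + β) / (Real.sqrt 2 : ℂ),
        ((α - 1)/2 * ((τ : ℂ) * I - (normSq z : ℂ)) - β * starRingEnd ℂ z + (α + 1)/2)
          * (Real.exp (-t/2) : ℂ)] := by
  have h2 : (Real.sqrt 2 : ℂ) ≠ 0 := ofReal_ne_zero.mpr (Real.sqrt_ne_zero'.mpr two_pos)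
  have h2sq : ((Real.sqrt 2 : ℝ) : ℂ) ^ 2 = 2 := by exact_mod_cast Real.sq_sqrt zero_le_two
  ext j
  fin_cases j <;> simp [kmat, nmat, amat, mul_apply, Fin.sum_univ_three, -ofReal_exp]
  · field_simp
    linear_combination (α - 1) * z * h2sq
  · field_simp
    ring

lemma normSq_expand_of_normSq_add_normSq_eq_one {α β : ℂ} (hαβ : normSq α + normSq β = 1)
    (z : ℂ) (τ E : ℝ) :
    normSq ((α - 1)/2 * (-(E : ℂ) - (normSq z : ℂ) + (τ : ℂ) * I)
        - β * starRingEnd ℂ z + (α + 1)/2)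
      = E ^ 2 * normSq ((α - 1)/2) + E * normSq ((α - 1) * z + β) / 2
        + normSq ((α - 1)/2 * ((τ : ℂ) * I - (normSq z : ℂ))
          - β * starRingEnd ℂ z + (α + 1)/2) := by
  simp only [normSq_apply, add_re, add_im, sub_re, sub_im, mul_re, mul_im, I_re, I_im,
    ofReal_re, ofReal_im, one_re, one_im, conj_re, conj_im, neg_re, neg_im,
    div_ofNat_re, div_ofNat_im] at hαβ ⊢
  -- the cross term is linear in `E`, and equals `E * normSq ((α - 1) * z + β) / 2` on the sphere
  linear_combination (-E/2) * hαβ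

lemma rowNormSq_kmat_mul_nmat_mul_amat {α β : ℂ} (hαβ : normSq α + normSq β = 1) (z : ℂ)
    (τ t : ℝ) :
    rowNormSq (kmat α β * nmat z τ * amat t) 2 = Real.exp (-t) *
      ‖(α - 1)/2 * (-(Real.exp t : ℂ) - (normSq z : ℂ) + (τ : ℂ) * I)
        - β * starRingEnd ℂ z + (α + 1)/2‖ ^ 2 := by
  have hsqrt : normSq (Real.sqrt 2 : ℂ) = 2 := by
    rw [normSq_ofReal, Real.mul_self_sqrt zero_le_two]
  have hexp : Real.exp (t/2) * Real.exp (t/2) = Real.exp t := by rw [← Real.exp_add]; ring_nf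
  have hexp_neg : Real.exp (-t/2) * Real.exp (-t/2) = Real.exp (-t) := by
    rw [← Real.exp_add]; ring_nf
  have hinv : Real.exp (-t) * Real.exp t = 1 := by
    rw [← Real.exp_add, neg_add_cancel, Real.exp_zero]
  rw [rowNormSq, Fin.sum_univ_three, kmat_mul_nmat_mul_amat_row_two, Complex.sq_norm,
    normSq_expand_of_normSq_add_normSq_eq_one hαβ]
  simp only [cons_val_zero, cons_val_one, cons_val_two, vecHead, vecTail, Function.comp_apply,
    Fin.succ_zero_eq_one, normSq_mul, normSq_div, normSq_ofReal, hsqrt, hexp, hexp_neg]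
  linear_combination
    -(normSq (α - 1) / normSq 2 * Real.exp t + normSq ((α - 1) * z + β) / 2) * hinv

lemma eq_sub_log_of_exp_neg_eq_mul {a b c : ℝ} (h : Real.exp (-a) = Real.exp (-b) * c) :
    a = b - Real.log c := by
  have hc : c = Real.exp (b - a) := by
    rw [sub_eq_add_neg, Real.exp_add, h, ← mul_assoc, ← Real.exp_add, add_neg_cancel,
      Real.exp_zero, one_mul]
  rw [hc, Real.log_exp]; ring

theorem explicit_formula_for_A_projection_general
    (AA : Matrix (Fin 3) (Fin 3) ℂ → ℝ)
    (κ : Matrix (Fin 3) (Fin 3) ℂ → Matrix (Fin 3) (Fin 3) ℂ)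
    (hdec : ∀ g ∈ U21, κ g ∈ K0 ∧ ∃ n ∈ Nset, g = n * amat (AA g) * κ g)
    (g : Matrix (Fin 3) (Fin 3) ℂ) (n₀ m : Matrix (Fin 3) (Fin 3) ℂ) (t₀ : ℝ) (α β : ℂ)
    (hg : g ∈ U21) (hn₀ : n₀ ∈ Nset) (hm : m ∈ Mset) (hαβ : normSq α + normSq β = 1)
    (hdecg : g = n₀ * amat t₀ * m * kmat α β) :
    ∀ (z : ℂ) (τ t : ℝ),
      AA (g * nmat z τ * amat t) = t₀ + t -
        Real.log ((‖(α - 1)/2 * (-(Real.exp t : ℂ) - (normSq z : ℂ) + (τ : ℂ) * I)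
          - β * starRingEnd ℂ z + (α + 1)/2‖)^2) := by
  intro z τ t
  obtain ⟨z₀, τ₀, rfl⟩ := hn₀
  have hx : g * nmat z τ * amat t ∈ U21 :=
    mul_mem_U21 (mul_mem_U21 hg (nmat_mem_U21 z τ)) (amat_mem_U21 t)
  obtain ⟨hκ, n, hn, hxdec⟩ := hdec _ hx
  obtain ⟨c, hc, hmrow⟩ := exists_row_two_eq_single_of_mem_Mset hm
  have hrow : (nmat z₀ τ₀ * amat t₀ * m) 2 = Pi.single 2 ((Real.exp (-t₀/2) : ℂ) * c) := by
    rw [row_mul_of_row_eq_single (nmat_mul_amat_row_two z₀ τ₀ t₀), hmrow, ← Pi.single_smul,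
      smul_eq_mul]
  apply eq_sub_log_of_exp_neg_eq_mul
  calc Real.exp (-AA (g * nmat z τ * amat t))
      = rowNormSq (g * nmat z τ * amat t) 2 := (rowNormSq_of_iwasawa hn hκ hxdec).symm
    _ = rowNormSq (nmat z₀ τ₀ * amat t₀ * m * (kmat α β * nmat z τ * amat t)) 2 := by
        simp only [hdecg, Matrix.mul_assoc]
    _ = Real.exp (-t₀) * rowNormSq (kmat α β * nmat z τ * amat t) 2 := by
        rw [rowNormSq_of_row_eq_smul (row_mul_of_row_eq_single hrow _), normSq_mul,
          normSq_exp_neg_half, hc, mul_one]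
    _ = _ := by
        rw [rowNormSq_kmat_mul_nmat_mul_amat hαβ, neg_add, Real.exp_add, mul_assoc]

theorem explicit_formula_for_A_projection
    (AA : Matrix (Fin 3) (Fin 3) ℂ → ℝ)
    (κ : Matrix (Fin 3) (Fin 3) ℂ → Matrix (Fin 3) (Fin 3) ℂ)
    (hdec : ∀ g ∈ U21, κ g ∈ K0 ∧ ∃ n ∈ Nset, g = n * amat (AA g) * κ g)
    (huniq : ∀ n ∈ Nset, ∀ n' ∈ Nset, ∀ (t t' : ℝ), ∀ k ∈ K0, ∀ k' ∈ K0,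
      n * amat t * k = n' * amat t' * k' → t = t' ∧ k = k')
    (g : Matrix (Fin 3) (Fin 3) ℂ) (n₀ m : Matrix (Fin 3) (Fin 3) ℂ) (t₀ : ℝ) (α β : ℂ)
    (hg : g ∈ U21) (hn₀ : n₀ ∈ Nset) (hm : m ∈ Mset) (hαβ : normSq α + normSq β = 1)
    (hdecg : g = n₀ * amat t₀ * m * kmat α β) :
    ∀ (z : ℂ) (τ t : ℝ),
      AA (g * nmat z τ * amat t) = t₀ + t -
        Real.log ((‖(α - 1)/2 * (-(Real.exp t : ℂ) - (normSq z : ℂ) + (τ : ℂ) * I)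
          - β * starRingEnd ℂ z + (α + 1)/2‖)^2) :=
  explicit_formula_for_A_projection_general AA κ hdec g n₀ m t₀ α β hg hn₀ hm hαβ hdecg

end
end

section
/- Suppose |z| ≤ Cλ^{-1/2}, |τ| ≤ Cλ^{-1/2} for constants C > 0 and λ ≥ 1, and suppose 𝒜(z,τ,t) ≥ δ for some δ > 0, where cosh(𝒜(z,τ,t)) = cosh(t) + (1/2)e^{-t}(|z|⁴+2|z|²+τ²) + |z|². Then there is a constant c > 0 depending only on C and an upper bound on |t| such that, if additionally λ ≥ λ₀(C,δ) is sufficiently large and |t| ≤ 1, then |t| ≥ cδ. -/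
/-!
Write `cosh 𝒜 = cosh t + E`. The hypotheses on `z` and `τ` make the excess `E` of order
`C² / λ`, so for `λ` large it is at most `δ² / 4`. Comparing the Taylor bounds
`1 + δ² / 2 ≤ cosh δ ≤ cosh 𝒜` and `cosh t ≤ 1 + t²` (valid for `|t| ≤ 1`) then gives
`δ² / 4 ≤ t²`, i.e. `|t| ≥ δ / 2`.
-/

open Complex

namespace Real

theorem one_add_sq_div_two_le_cosh (x : ℝ) : 1 + x ^ 2 / 2 ≤ cosh x := by
  have h := sum_le_hasSum (Finset.range 2) (fun n _ => by rw [pow_mul]; positivity) (hasSum_cosh x)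
  norm_num [Finset.sum_range_succ] at h
  linarith

theorem cosh_le_one_add_sq {x : ℝ} (hx : |x| ≤ 1) : cosh x ≤ 1 + x ^ 2 := by
  have hpos := abs_le.1 (abs_exp_sub_one_sub_id_le hx)
  have hneg := abs_le.1 (abs_exp_sub_one_sub_id_le (x := -x) (by rwa [abs_neg]))
  rw [cosh_eq]
  nlinarith [hpos.2, hneg.2]

theorem sq_le_div_of_le_mul_rpow_neg_half {x C lam : ℝ} (hx : 0 ≤ x) (hlam : 0 ≤ lam)
    (h : x ≤ C * lam ^ (-(1 : ℝ) / 2)) : x ^ 2 ≤ C ^ 2 / lam := by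
  have hsq : (lam ^ (-(1 : ℝ) / 2)) ^ 2 = lam⁻¹ := by
    rw [← rpow_mul_natCast hlam]
    norm_num [rpow_neg_one]
  calc x ^ 2 ≤ (C * lam ^ (-(1 : ℝ) / 2)) ^ 2 := pow_le_pow_left₀ hx h 2
    _ = C ^ 2 / lam := by rw [mul_pow, hsq, div_eq_mul_inv]

end Real

/-- `cosh 𝒜(z, τ, t) - cosh t`. -/
noncomputable def radialExcess (z : ℂ) (τ t : ℝ) : ℝ :=
  (1 / 2) * Real.exp (-t) * (normSq z ^ 2 + 2 * normSq z + τ ^ 2) + normSq z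

theorem radialExcess_le {z : ℂ} {τ t s : ℝ} (hz : normSq z ≤ s) (hτ : τ ^ 2 ≤ s) (hs : s ≤ 1)
    (ht : -1 ≤ t) : radialExcess z τ t ≤ 7 * s := by
  have hexp : Real.exp (-t) ≤ 3 :=
    (Real.exp_le_exp.2 (neg_le.1 ht)).trans (Real.exp_one_lt_d9.le.trans (by norm_num))
  have hz0 := normSq_nonneg z
  have hsum : normSq z ^ 2 + 2 * normSq z + τ ^ 2 ≤ 4 * s := by nlinarith
  unfold radialExcess
  nlinarith [Real.exp_pos (-t)]

theorem sq_div_four_le_sq_of_cosh_le_cosh_add {δ t ε : ℝ} (ht : |t| ≤ 1)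
    (hcosh : Real.cosh δ ≤ Real.cosh t + ε) (hε : ε ≤ δ ^ 2 / 4) : δ ^ 2 / 4 ≤ t ^ 2 := by
  linarith [Real.one_add_sq_div_two_le_cosh δ, Real.cosh_le_one_add_sq ht]

/-- If |z|,|τ| ≪ λ^{-1/2} and the Cartan radial component 𝒜(z,τ,t) ≥ δ, then |t| ≫ δ
(for λ large and |t| ≤ 1). -/
theorem lower_bound_for_t_from_radial_component :
    ∀ C > (0:ℝ), ∃ c > (0:ℝ), ∀ δ > (0:ℝ), ∃ lam0 : ℝ, ∀ lam ≥ lam0, lam ≥ 1 →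
      ∀ (z : ℂ) (τ t 𝒜 : ℝ),
        ‖z‖ ≤ C * lam ^ (-(1:ℝ)/2) →
        |τ| ≤ C * lam ^ (-(1:ℝ)/2) →
        |t| ≤ 1 →
        0 ≤ 𝒜 →
        Real.cosh 𝒜 = Real.cosh t
          + (1/2) * Real.exp (-t) * ((normSq z)^2 + 2 * normSq z + τ^2) + normSq z →
        δ ≤ 𝒜 →
        c * δ ≤ |t| := by
  intro C _
  refine ⟨1 / 2, by norm_num, fun δ hδ => ?_⟩
  refine ⟨max (C ^ 2) (28 * C ^ 2 / δ ^ 2),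
    fun lam hlam hlam1 z τ t 𝒜 hz hτ ht h𝒜 hcosh hδ𝒜 => ?_⟩
  have hlam0 : 0 < lam := by linarith
  have hC2 : C ^ 2 ≤ lam := (le_max_left _ _).trans hlam
  have h28 : 28 * C ^ 2 ≤ lam * δ ^ 2 :=
    (div_le_iff₀ (by positivity)).1 ((le_max_right _ _).trans hlam)
  have hs1 : C ^ 2 / lam ≤ 1 := (div_le_one hlam0).2 hC2
  have hsδ : 7 * (C ^ 2 / lam) ≤ δ ^ 2 / 4 := by
    rw [mul_div_assoc', div_le_div_iff₀ hlam0 (by norm_num)]; linarith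
  have hz2 : normSq z ≤ C ^ 2 / lam := by
    rw [normSq_eq_norm_sq]; exact Real.sq_le_div_of_le_mul_rpow_neg_half (norm_nonneg z) hlam0.le hz
  have hτ2 : τ ^ 2 ≤ C ^ 2 / lam := by
    rw [← sq_abs]; exact Real.sq_le_div_of_le_mul_rpow_neg_half (abs_nonneg τ) hlam0.le hτ
  have hE := radialExcess_le hz2 hτ2 hs1 (abs_le.1 ht).1
  have hδcosh : Real.cosh δ ≤ Real.cosh t + radialExcess z τ t := by
    rw [radialExcess, ← add_assoc, ← hcosh, Real.cosh_le_cosh, abs_of_pos hδ, abs_of_nonneg h𝒜]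
    exact hδ𝒜
  have key := sq_div_four_le_sq_of_cosh_le_cosh_add ht hδcosh (hE.trans hsδ)
  have : |δ / 2| ≤ |t| := sq_le_sq.1 (by linarith)
  rwa [abs_of_pos (half_pos hδ), ← one_div_mul_eq_div] at this
end

section
/- Let λ, β ≥ 2 with β ≤ λ, let ε₀ ∈ (0,1/8), and suppose |z| ≤ λ^{-1/2}, |τ| ≤ λ^{-1/2}, |t| ≤ 1, and 𝒜(z,τ,t) ≥ β^{-1/2+ε₀}. Then ∂𝒜/∂t (z,τ,t) = sgn(t) + O(λ^{-1}β^{1-2ε₀}), where the implied constant is absolute; i.e., there is an absolute constant C such that |∂𝒜/∂t (z,τ,t) − sgn(t)| ≤ C λ^{-1}β^{1-2ε₀} whenever λ^{-1}β^{1-2ε₀} is at most a fixed absolute constant. -/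
/-!
Write `s = sinh 𝒜` and `K = cosh 𝒜 - cosh t`, so that `s 𝒜' = sinh t - Q` with
`Q = ½ e^{-t}(|z|⁴ + 2|z|² + τ²)`. Since `sinh t = sgn t · sinh |t|`, the error
`s (𝒜' - sgn t)` is at most `(s - sinh |t|) + Q`, and
`(s - sinh |t|) s ≤ s² - sinh² |t| = cosh² 𝒜 - cosh² t = 2 K cosh t + K²`.
Hence `|𝒜' - sgn t| ≤ (2 K cosh t + K²) / 𝒜² + Q / 𝒜`, where `K, Q = O(λ⁻¹)` and
`𝒜⁻¹ ≤ 𝒜⁻² ≤ β^{1-2ε₀}`.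
-/

namespace Real

lemma abs_sinh_sub_sign_mul_sinh_le {t x : ℝ} (h : |t| ≤ x) :
    |sinh t - sign t * sinh x| ≤ sinh x - sinh |t| := by
  have hsinh : sinh |t| ≤ sinh x := sinh_le_sinh.mpr h
  rcases lt_trichotomy t 0 with ht | rfl | ht
  · rw [sign_of_neg ht, abs_of_neg ht, sinh_neg] at *
    rw [abs_of_nonneg (by linarith [sinh_neg_iff.mpr ht])]
    linarith
  · simpa using hsinh
  · rw [sign_of_pos ht, abs_of_pos ht] at *
    rw [abs_of_nonpos (by linarith)]
    linarith

lemma sinh_sub_sinh_abs_mul_sinh_le {t x K : ℝ} (hcosh : cosh x = cosh t + K) (h : |t| ≤ x) :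
    (sinh x - sinh |t|) * sinh x ≤ 2 * cosh t * K + K ^ 2 :=
  calc (sinh x - sinh |t|) * sinh x
      ≤ (sinh x - sinh |t|) * (sinh x + sinh |t|) := by
        have := sinh_le_sinh.mpr h
        have := sinh_nonneg_iff.mpr (abs_nonneg t)
        nlinarith
    _ = cosh x ^ 2 - cosh |t| ^ 2 := by linear_combination sinh_sq x - sinh_sq |t|
    _ = 2 * cosh t * K + K ^ 2 := by rw [cosh_abs, hcosh]; ring

lemma abs_sub_sign_mul_sinh_sq_le {x t K Q d : ℝ} (hx : 0 ≤ x) (hK : 0 ≤ K) (hQ : 0 ≤ Q)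
    (hcosh : cosh x = cosh t + K) (hd : sinh x * d = sinh t - Q) :
    |d - sign t| * sinh x ^ 2 ≤ 2 * cosh t * K + K ^ 2 + Q * sinh x := by
  have htx : |t| ≤ x := by
    simpa [abs_of_nonneg hx] using cosh_le_cosh.mp (show cosh t ≤ cosh x by linarith)
  have hs : 0 ≤ sinh x := sinh_nonneg_iff.mpr hx
  have herr : |d - sign t| * sinh x ≤ (sinh x - sinh |t|) + Q :=
    calc |d - sign t| * sinh x = |(sinh t - sign t * sinh x) - Q| := by
          rw [← abs_of_nonneg hs, ← abs_mul, abs_of_nonneg hs]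
          congr 1; linear_combination hd
      _ ≤ |sinh t - sign t * sinh x| + |Q| := abs_sub _ _
      _ ≤ (sinh x - sinh |t|) + Q := by
          rw [abs_of_nonneg hQ]; linarith [abs_sinh_sub_sign_mul_sinh_le htx]
  calc |d - sign t| * sinh x ^ 2 = (|d - sign t| * sinh x) * sinh x := by ring
    _ ≤ ((sinh x - sinh |t|) + Q) * sinh x := mul_le_mul_of_nonneg_right herr hs
    _ ≤ 2 * cosh t * K + K ^ 2 + Q * sinh x := by
        linarith [sinh_sub_sinh_abs_mul_sinh_le hcosh htx]

lemma abs_sub_sign_le_div_sq {a x t K Q d : ℝ} (ha : 0 < a) (ha1 : a ≤ 1) (hax : a ≤ x)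
    (hK : 0 ≤ K) (hQ : 0 ≤ Q) (hcosh : cosh x = cosh t + K) (hd : sinh x * d = sinh t - Q) :
    |d - sign t| ≤ (2 * cosh t * K + K ^ 2 + Q) / a ^ 2 := by
  have hx : 0 ≤ x := ha.le.trans hax
  have has : a ≤ sinh x := hax.trans (self_le_sinh_iff.mpr hx)
  have hs : 0 < sinh x := ha.trans_le has
  have hD : 0 ≤ 2 * cosh t * K + K ^ 2 := by positivity
  calc |d - sign t|
      ≤ (2 * cosh t * K + K ^ 2 + Q * sinh x) / sinh x ^ 2 := by
        rw [le_div_iff₀ (by positivity)]; exact abs_sub_sign_mul_sinh_sq_le hx hK hQ hcosh hd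
    _ = (2 * cosh t * K + K ^ 2) / sinh x ^ 2 + Q / sinh x := by field_simp
    _ ≤ (2 * cosh t * K + K ^ 2) / a ^ 2 + Q / a := by gcongr
    _ ≤ (2 * cosh t * K + K ^ 2) / a ^ 2 + Q / a ^ 2 := by
        gcongr
        nlinarith
    _ = (2 * cosh t * K + K ^ 2 + Q) / a ^ 2 := by ring

lemma exp_le_three_of_abs_le_one {t : ℝ} (ht : |t| ≤ 1) : exp t ≤ 3 := by
  have := exp_one_lt_d9
  have := exp_le_exp.mpr (le_of_abs_le ht)
  linarith

lemma cosh_le_three_of_abs_le_one {t : ℝ} (ht : |t| ≤ 1) : cosh t ≤ 3 := by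
  have := exp_le_three_of_abs_le_one ht
  have := exp_le_three_of_abs_le_one (t := -t) (by rwa [abs_neg])
  rw [cosh_eq]; linarith

lemma sq_le_inv_of_abs_le_rpow_neg_half {y l : ℝ} (hl : 0 ≤ l) (hy : |y| ≤ l ^ (-(1:ℝ) / 2)) :
    y ^ 2 ≤ l⁻¹ :=
  calc y ^ 2 = |y| ^ 2 := (sq_abs y).symm
    _ ≤ (l ^ (-(1:ℝ) / 2)) ^ 2 := by gcongr
    _ = l⁻¹ := by rw [← rpow_natCast, ← rpow_mul hl]; norm_num [rpow_neg_one]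

lemma inv_sq_rpow_neg_half_add {b ε : ℝ} (hb : 0 ≤ b) :
    ((b ^ (-(1:ℝ) / 2 + ε)) ^ 2)⁻¹ = b ^ (1 - 2 * ε) := by
  rw [← rpow_natCast, ← rpow_mul hb, ← rpow_neg hb]; ring_nf

lemma half_exp_neg_mul_le {t R τ l : ℝ} (ht : |t| ≤ 1) (hR0 : 0 ≤ R) (hR : R ≤ l)
    (hτ : τ ^ 2 ≤ l) (hl : l ≤ 1 / 2) :
    1 / 2 * exp (-t) * (R ^ 2 + 2 * R + τ ^ 2) ≤ 6 * l := by
  have hexp := exp_le_three_of_abs_le_one (t := -t) (by rwa [abs_neg])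
  have hR2 : R ^ 2 ≤ l := by nlinarith
  have : 0 ≤ R ^ 2 + 2 * R + τ ^ 2 := by positivity
  nlinarith [exp_pos (-t)]

end Real

open Complex

/-- ∂𝒜/∂t = sgn(t) + O(λ^{-1}β^{1-2ε₀}) in the stated range, where the t-derivative 𝒜'
satisfies sinh(𝒜)·𝒜' = sinh(t) − (1/2)e^{-t}(|z|⁴+2|z|²+τ²). -/
theorem radial_derivative_asymptotics :
    ∃ C > (0:ℝ), ∃ c₀ > (0:ℝ),
      ∀ (lam beta ε₀ : ℝ), 2 ≤ lam → 2 ≤ beta → beta ≤ lam → 0 < ε₀ → ε₀ < 1/8 →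
      ∀ (z : ℂ) (τ t 𝒜 𝒜' : ℝ),
        ‖z‖ ≤ lam ^ (-(1:ℝ)/2) →
        |τ| ≤ lam ^ (-(1:ℝ)/2) →
        |t| ≤ 1 →
        0 ≤ 𝒜 →
        Real.cosh 𝒜 = Real.cosh t
          + (1/2) * Real.exp (-t) * ((normSq z)^2 + 2 * normSq z + τ^2) + normSq z →
        beta ^ (-(1:ℝ)/2 + ε₀) ≤ 𝒜 →
        Real.sinh 𝒜 * 𝒜' = Real.sinh t
          - (1/2) * Real.exp (-t) * ((normSq z)^2 + 2 * normSq z + τ^2) →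
        lam⁻¹ * beta ^ ((1:ℝ) - 2*ε₀) ≤ c₀ →
        |𝒜' - Real.sign t| ≤ C * lam⁻¹ * beta ^ ((1:ℝ) - 2*ε₀) := by
  refine ⟨100, by norm_num, 1, by norm_num, ?_⟩
  intro lam beta ε₀ hlam hbeta _ _ hε z τ t 𝒜 𝒜' hz hτ ht _ hcosh ha hderiv _
  set l := lam⁻¹
  set R := normSq z
  set Q := 1 / 2 * Real.exp (-t) * (R ^ 2 + 2 * R + τ ^ 2)
  set a := beta ^ (-(1:ℝ) / 2 + ε₀)
  have hl : l ≤ 1 / 2 := by rw [inv_le_comm₀ (by linarith) (by norm_num)]; linarith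
  have hR0 : 0 ≤ R := normSq_nonneg z
  have hR : R ≤ l := by
    rw [show R = ‖z‖ ^ 2 from normSq_eq_norm_sq z]
    exact Real.sq_le_inv_of_abs_le_rpow_neg_half (by linarith) (by rwa [abs_norm])
  have hQ : Q ≤ 6 * l := Real.half_exp_neg_mul_le ht hR0 hR
    (Real.sq_le_inv_of_abs_le_rpow_neg_half (by linarith) hτ) hl
  have hQ0 : 0 ≤ Q := by positivity
  have ha0 : 0 < a := Real.rpow_pos_of_pos (by linarith) _
  have ha1 : a ≤ 1 := Real.rpow_le_one_of_one_le_of_nonpos (by linarith) (by linarith)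
  have hcoeff : 2 * Real.cosh t * (Q + R) + (Q + R) ^ 2 + Q ≤ 100 * l := by
    have := Real.cosh_le_three_of_abs_le_one ht
    have := Real.one_le_cosh t
    nlinarith
  calc |𝒜' - Real.sign t|
      ≤ (2 * Real.cosh t * (Q + R) + (Q + R) ^ 2 + Q) / a ^ 2 :=
        Real.abs_sub_sign_le_div_sq ha0 ha1 ha (by positivity) hQ0 (by rw [hcosh]; ring) hderiv
    _ ≤ 100 * l * beta ^ ((1:ℝ) - 2 * ε₀) := by
        rw [div_eq_mul_inv, Real.inv_sq_rpow_neg_half_add (by linarith)]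
        gcongr
end
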